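/- Let α ∈ W^*. Then α ∈ 𝔇^{(z)}_{σ₁,σ₂}(W) if and only if for every v ∈ V^{(j₁,j₂)} with j₁, j₂ ∈ ℤ there exist nonnegative integers r and s such that x^{s+j₁/T}(x+z)^{r+j₂/T} Y_W^*(v, x+z)α ∈ W^*[[x]]. -/

import Mathlib

open scoped BigOperators

noncomputable section

/-- The generalized binomial coefficient `binom(a, n)` for `a : ℂ`, `n : ℕ`. -/
def cbinom (a : ℂ) (n : ℕ) : ℂ := (∏ i ∈ Finset.range n, (a - (i : ℂ))) / (n.factorial : ℂ)

/-- The argument of a complex number normalized to lie in `[0, 2π)`. -/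
def argB (ξ : ℂ) : ℝ := if 0 ≤ Complex.arg ξ then Complex.arg ξ else Complex.arg ξ + 2 * Real.pi

/-- The branch of the logarithm with `log ξ = ln |ξ| + i arg ξ`, `0 ≤ arg ξ < 2π`. -/
def logB (ξ : ℂ) : ℂ := (Real.log ‖ξ‖ : ℂ) + (argB ξ : ℂ) * Complex.I

/-- `ξ ^ α = e^{α log ξ}` with the chosen branch of `log`. -/
def bpow (ξ α : ℂ) : ℂ := Complex.exp (α * logB ξ)

/-- `e^{α π i}`. -/
def epi (α : ℂ) : ℂ := Complex.exp (α * (Real.pi : ℂ) * Complex.I)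

/-!  Formal series are recorded by the coefficient function `f : ℂ → ·`, where `f n` is the
coefficient of `x^{-n-1}`.  The following are the coefficients of the products with
`(x-z)^β`, `(z-x)^β`, `(x+z)^β`, `(z+x)^β` (with the expansion conventions
`(x ± ξ)^β = Σ_{j≥0} binom(β,j) (±ξ)^j x^{β-j}` and
`(ξ ± x)^β = Σ_{j≥0} binom(β,j) ξ^{β-j} (±x)^j`, where `ξ^γ` uses the chosen branch),
and of the substitution `f(x+z)`. -/

/-- Coefficient of `x^{-n-1}` in `(x-z)^β f(x)`. -/
def mulXZ (z β : ℂ) (f : ℂ → ℂ) (n : ℂ) : ℂ :=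
  ∑ᶠ i : ℕ, cbinom β i * (-z) ^ i * f (n + β - (i : ℂ))

/-- Coefficient of `x^{-n-1}` in `(z-x)^β f(x)`. -/
def mulZX (z β : ℂ) (f : ℂ → ℂ) (n : ℂ) : ℂ :=
  ∑ᶠ i : ℕ, cbinom β i * bpow z (β - (i : ℂ)) * (-1 : ℂ) ^ i * f (n + (i : ℂ))

/-- Coefficient of `x^{-n-1}` in `(x+z)^β f(x)`. -/
def mulXpZ (z β : ℂ) (f : ℂ → ℂ) (n : ℂ) : ℂ :=
  ∑ᶠ i : ℕ, cbinom β i * z ^ i * f (n + β - (i : ℂ))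

/-- Coefficient of `x^{-n-1}` in `(z+x)^β f(x)`. -/
def mulZpX (z β : ℂ) (f : ℂ → ℂ) (n : ℂ) : ℂ :=
  ∑ᶠ i : ℕ, cbinom β i * bpow z (β - (i : ℂ)) * f (n + (i : ℂ))

/-- Coefficient of `x^{-n-1}` in `f(x+z) = (e^{z d/dx} f)(x)`. -/
def substZ (z : ℂ) (f : ℂ → ℂ) (n : ℂ) : ℂ :=
  ∑ᶠ i : ℕ, cbinom ((i : ℂ) - n - 1) i * z ^ i * f (n - (i : ℂ))

/-- A vertex algebra over `ℂ`, presented by its components `Y u n = u_n`, with the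
Jacobi identity in (componentwise) Borcherds form. -/
structure VertexAlg (V : Type*) [AddCommGroup V] [Module ℂ V] where
  Y : V →ₗ[ℂ] ℤ → V →ₗ[ℂ] V
  one : V
  trunc : ∀ u v : V, ∃ N : ℤ, ∀ n : ℤ, N ≤ n → Y u n v = 0
  vacuum_eq : ∀ (n : ℤ) (v : V), Y one n v = if n = -1 then v else 0
  create : ∀ (u : V) (n : ℤ), 0 ≤ n → Y u n one = 0
  create' : ∀ u : V, Y u (-1) one = u
  jacobi : ∀ (u v w : V) (a b c : ℤ),
    (∑ᶠ i : ℕ, ((-1 : ℂ) ^ i * cbinom (a : ℂ) i) •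
      (Y u (a + b - (i : ℤ)) (Y v (c + (i : ℤ)) w)
        - ((-1 : ℂ) ^ a) • Y v (a + c - (i : ℤ)) (Y u (b + (i : ℤ)) w)))
    = ∑ᶠ i : ℕ, cbinom (b : ℂ) i • Y (Y u (a + (i : ℤ)) v) (b + c - (i : ℤ)) w

/-- An automorphism of a vertex algebra. -/
structure VAAut {V : Type*} [AddCommGroup V] [Module ℂ V] (A : VertexAlg V) where
  g : V ≃ₗ[ℂ] V
  map_one : g A.one = A.one
  map_Y : ∀ (u : V) (n : ℤ) (v : V), g (A.Y u n v) = A.Y (g u) n (g v)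

/-- `v` lies in the eigenspace `V^j = {v | σ v = e^{2πij/T} v}`. -/
def eig {V : Type*} [AddCommGroup V] [Module ℂ V] {A : VertexAlg V}
    (σ : VAAut A) (T : ℕ) (j : ℤ) (v : V) : Prop :=
  σ.g v = Complex.exp (2 * (Real.pi : ℂ) * Complex.I * (j : ℂ) / (T : ℂ)) • v

/-- A (weak) `σ`-twisted module for a vertex algebra, presented componentwise:
`Y v n` is the coefficient of `x^{-n-1}` in `Y_W(v,x)`; the `σ`-twisted Jacobi
identity is stated coefficientwise. -/
structure TwistedModule {V : Type*} [AddCommGroup V] [Module ℂ V]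
    (W : Type*) [AddCommGroup W] [Module ℂ W]
    (A : VertexAlg V) (σ : VAAut A) (T : ℕ) where
  Y : V →ₗ[ℂ] ℂ → W →ₗ[ℂ] W
  vacuum_eq : ∀ (n : ℂ) (w : W), Y A.one n w = if n = -1 then w else 0
  latt : ∀ (v : V) (n : ℂ), (∀ m : ℤ, n ≠ (m : ℂ) / (T : ℂ)) → Y v n = 0
  eig_supp : ∀ (j : ℤ) (v : V), eig σ T j v →
    ∀ n : ℂ, (∀ m : ℤ, n ≠ (j : ℂ) / (T : ℂ) + (m : ℂ)) → Y v n = 0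
  trunc : ∀ (v : V) (w : W), ∃ N : ℤ, ∀ m : ℤ, N ≤ m → Y v ((m : ℂ) / (T : ℂ)) w = 0
  jacobi : ∀ (j : ℤ) (u : V), eig σ T j u → ∀ (v : V) (w : W) (a b c : ℤ),
    (∑ᶠ i : ℕ, ((-1 : ℂ) ^ i * cbinom (a : ℂ) i) •
      (Y u ((a : ℂ) + (b : ℂ) / (T : ℂ) - (i : ℂ)) (Y v ((c : ℂ) / (T : ℂ) + (i : ℂ)) w)
        - ((-1 : ℂ) ^ a) •
          Y v ((a : ℂ) + (c : ℂ) / (T : ℂ) - (i : ℂ)) (Y u ((b : ℂ) / (T : ℂ) + (i : ℂ)) w)))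
    = if (T : ℤ) ∣ (b - j) then
        (∑ᶠ i : ℕ, cbinom ((b : ℂ) / (T : ℂ)) i •
          Y (A.Y u (a + (i : ℤ)) v) ((b : ℂ) / (T : ℂ) + (c : ℂ) / (T : ℂ) - (i : ℂ)) w)
      else 0

/-- A right `σ`-twisted module for a vertex algebra, presented componentwise
(opposite twisted Jacobi identity, coefficientwise). -/
structure RightTwistedModule {V : Type*} [AddCommGroup V] [Module ℂ V]
    (W : Type*) [AddCommGroup W] [Module ℂ W]
    (A : VertexAlg V) (σ : VAAut A) (T : ℕ) where
  Y : V →ₗ[ℂ] ℂ → W →ₗ[ℂ] W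
  vacuum_eq : ∀ (n : ℂ) (w : W), Y A.one n w = if n = -1 then w else 0
  latt : ∀ (v : V) (n : ℂ), (∀ m : ℤ, n ≠ (m : ℂ) / (T : ℂ)) → Y v n = 0
  trunc : ∀ (v : V) (w : W), ∃ N : ℤ, ∀ m : ℤ, m ≤ N → Y v ((m : ℂ) / (T : ℂ)) w = 0
  jacobi : ∀ (j : ℤ) (u : V), eig σ T j u → ∀ (v : V) (w : W) (a b c : ℤ),
    (∑ᶠ i : ℕ, ((-1 : ℂ) ^ i * cbinom (a : ℂ) i) •
      (Y v ((c : ℂ) / (T : ℂ) + (i : ℂ)) (Y u ((a : ℂ) + (b : ℂ) / (T : ℂ) - (i : ℂ)) w)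
        - ((-1 : ℂ) ^ a) •
          Y u ((b : ℂ) / (T : ℂ) + (i : ℂ)) (Y v ((a : ℂ) + (c : ℂ) / (T : ℂ) - (i : ℂ)) w)))
    = if (T : ℤ) ∣ (b + j) then
        (∑ᶠ i : ℕ, cbinom ((b : ℂ) / (T : ℂ)) i •
          Y (A.Y u (a + (i : ℤ)) v) ((b : ℂ) / (T : ℂ) + (c : ℂ) / (T : ℂ) - (i : ℂ)) w)
      else 0

section DualSetup

variable {V : Type*} [AddCommGroup V] [Module ℂ V] {W : Type*} [AddCommGroup W] [Module ℂ W]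
variable {A : VertexAlg V}

/-- The series `Y_W^*(v,x)α` paired with `w ∈ W`:  `m ↦ ⟨α, (Y_W v)_m w⟩`. -/
def Ydual (YW : V →ₗ[ℂ] ℂ → W →ₗ[ℂ] W) (v : V) (α : W → ℂ) (w : W) : ℂ → ℂ :=
  fun m => α (YW v m w)

/-- The condition `x^{j₂/T}(x-z)^{k+j₁/T} Y_W^*(v,x)α ∈ W^*((x))` (integer exponents and
lower truncation in `x`, uniformly in `w`). -/
def DCond (T : ℕ) (z : ℂ) (j₁ j₂ : ℤ) (YW : V →ₗ[ℂ] ℂ → W →ₗ[ℂ] W)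
    (v : V) (α : W → ℂ) (k : ℕ) : Prop :=
  (∀ n : ℂ, (∀ m : ℤ, n ≠ (m : ℂ)) → ∀ w : W,
    mulXZ z ((k : ℂ) + (j₁ : ℂ) / (T : ℂ)) (Ydual YW v α w) (n + (j₂ : ℂ) / (T : ℂ)) = 0) ∧
  (∃ N : ℤ, ∀ m : ℤ, N ≤ m → ∀ w : W,
    mulXZ z ((k : ℂ) + (j₁ : ℂ) / (T : ℂ)) (Ydual YW v α w) ((m : ℂ) + (j₂ : ℂ) / (T : ℂ)) = 0)

/-- The space `𝔇^{(z)}_{σ₁,σ₂}(W) ⊆ W^*`:  linear functionals `α` such that for every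
`v ∈ V^{(j₁,j₂)}` there is `k ∈ ℕ` with `x^{j₂/T}(x-z)^{k+j₁/T} Y_W^*(v,x)α ∈ W^*((x))`. -/
def Dspace (σ₁ σ₂ : VAAut A) (T : ℕ) (YW : V →ₗ[ℂ] ℂ → W →ₗ[ℂ] W) (z : ℂ) :
    Set (W → ℂ) :=
  { α | IsLinearMap ℂ α ∧ ∀ (j₁ j₂ : ℤ) (v : V), eig σ₁ T j₁ v → eig σ₂ T j₂ v →
      ∃ k : ℕ, DCond T z j₁ j₂ YW v α k }

/-- `YR` is the operation `Y_σ^R` on `𝔇^{(z)}_{σ₁,σ₂}(W)`:  it is linear in `v`, for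
`v ∈ V^{(j₁,j₂)}` and `α ∈ 𝔇` the series `Y_σ^R(v,x)α` has exponent support in
`x^{-j₂/T}(·)((x))`-form, and for every admissible `k ∈ ℕ`
`e^{(k+j₁/T)πi}(z-x)^{k+j₁/T} Y_σ^R(v,x)α = (x-z)^{k+j₁/T} Y_W^*(v,x)α`. -/
def IsYR (σ₁ σ₂ : VAAut A) (T : ℕ) (YW : V →ₗ[ℂ] ℂ → W →ₗ[ℂ] W) (z : ℂ)
    (YR : V → ℂ → (W → ℂ) → W → ℂ) : Prop :=
  (∀ (n : ℂ) (α : W → ℂ), IsLinearMap ℂ fun v => YR v n α) ∧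
  (∀ (j₁ j₂ : ℤ) (v : V), eig σ₁ T j₁ v → eig σ₂ T j₂ v →
    ∀ α ∈ Dspace σ₁ σ₂ T YW z,
      (∀ n : ℂ, (∀ m : ℤ, n ≠ (j₂ : ℂ) / (T : ℂ) + (m : ℂ)) → YR v n α = 0) ∧
      (∃ N : ℤ, ∀ m : ℤ, N ≤ m → YR v ((j₂ : ℂ) / (T : ℂ) + (m : ℂ)) α = 0) ∧
      (∀ k : ℕ, DCond T z j₁ j₂ YW v α k → ∀ (n : ℂ) (w : W),
        epi ((k : ℂ) + (j₁ : ℂ) / (T : ℂ)) *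
            mulZX z ((k : ℂ) + (j₁ : ℂ) / (T : ℂ)) (fun m => YR v m α w) n
          = mulXZ z ((k : ℂ) + (j₁ : ℂ) / (T : ℂ)) (Ydual YW v α w) n))

/-- The condition `x^{j₁/T}(x+z)^{l+j₂/T} Y_W^*(v,x+z)α ∈ W^*((x))`. -/
def LCond (T : ℕ) (z : ℂ) (j₁ j₂ : ℤ) (YW : V →ₗ[ℂ] ℂ → W →ₗ[ℂ] W)
    (v : V) (α : W → ℂ) (l : ℕ) : Prop :=
  (∀ n : ℂ, (∀ m : ℤ, n ≠ (m : ℂ)) → ∀ w : W,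
    mulXpZ z ((l : ℂ) + (j₂ : ℂ) / (T : ℂ)) (substZ z (Ydual YW v α w))
      (n + (j₁ : ℂ) / (T : ℂ)) = 0) ∧
  (∃ N : ℤ, ∀ m : ℤ, N ≤ m → ∀ w : W,
    mulXpZ z ((l : ℂ) + (j₂ : ℂ) / (T : ℂ)) (substZ z (Ydual YW v α w))
      ((m : ℂ) + (j₁ : ℂ) / (T : ℂ)) = 0)

/-- `YL` is the operation `Y_σ^L` on `𝔇^{(z)}_{σ₁,σ₂}(W)`:  linear in `v`, with exponent
support in `x^{-j₁/T}(·)((x))`-form, and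
`(z+x)^{l+j₂/T} Y_σ^L(v,x)α = (x+z)^{l+j₂/T} Y_W^*(v,x+z)α` for every admissible `l ∈ ℕ`. -/
def IsYL (σ₁ σ₂ : VAAut A) (T : ℕ) (YW : V →ₗ[ℂ] ℂ → W →ₗ[ℂ] W) (z : ℂ)
    (YL : V → ℂ → (W → ℂ) → W → ℂ) : Prop :=
  (∀ (n : ℂ) (α : W → ℂ), IsLinearMap ℂ fun v => YL v n α) ∧
  (∀ (j₁ j₂ : ℤ) (v : V), eig σ₁ T j₁ v → eig σ₂ T j₂ v →
    ∀ α ∈ Dspace σ₁ σ₂ T YW z,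
      (∀ n : ℂ, (∀ m : ℤ, n ≠ (j₁ : ℂ) / (T : ℂ) + (m : ℂ)) → YL v n α = 0) ∧
      (∃ N : ℤ, ∀ m : ℤ, N ≤ m → YL v ((j₁ : ℂ) / (T : ℂ) + (m : ℂ)) α = 0) ∧
      (∀ l : ℕ, LCond T z j₁ j₂ YW v α l → ∀ (n : ℂ) (w : W),
        mulZpX z ((l : ℂ) + (j₂ : ℂ) / (T : ℂ)) (fun m => YL v m α w) n
          = mulXpZ z ((l : ℂ) + (j₂ : ℂ) / (T : ℂ)) (substZ z (Ydual YW v α w)) n))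

end DualSetup

/-! For a series `f` whose powers of `x` are bounded above (as those of `Y_W^*(v,x)α` are, `W`
being a right module), substitution gives the formal identity
`x^β (x+z)^γ f(x+z) = (x^γ (x-z)^β f(x))|_{x ↦ x+z}`: it combines
`(x+z)^γ f(x+z) = (x^γ f)(x+z)` with `((x-z)^β g)(x+z) = x^β g(x+z)`, each a Chu–Vandermonde
identity coefficientwise. Substitution `x ↦ x+z` preserves power series and is inverted by
`x ↦ x-z`, so with `f = Y_W^*(v,x)α` the series `x^{s+j₁/T}(x+z)^{r+j₂/T} Y_W^*(v,x+z)α` is a power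
series iff `x^{r+j₂/T}(x-z)^{s+j₁/T} Y_W^*(v,x)α` is. The latter for some `r` says precisely
that `x^{j₂/T}(x-z)^{s+j₁/T} Y_W^*(v,x)α ∈ W^*((x))`, the condition defining `𝔇` with `k = s`. -/

open Finset

theorem cbinom_eq_choose (a : ℂ) (n : ℕ) : cbinom a n = Ring.choose a n := by
  rw [Ring.choose_eq_smul, cbinom, ← Polynomial.aeval_eq_smeval, Polynomial.aeval_def,
    Polynomial.eval₂_eq_eval_map, descPochhammer_map, descPochhammer_eval_eq_prod_range,
    smul_eq_mul, div_eq_inv_mul]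

theorem cbinom_natCast_of_lt {c i : ℕ} (h : c < i) : cbinom c i = 0 := by
  rw [cbinom_eq_choose, Ring.choose_natCast, Nat.choose_eq_zero_of_lt h, Nat.cast_zero]

theorem cbinom_add (a b : ℂ) (m : ℕ) :
    cbinom (a + b) m = ∑ p ∈ antidiagonal m, cbinom a p.1 * cbinom b p.2 := by
  simp only [cbinom_eq_choose]
  exact Ring.add_choose_eq m (Commute.all a b)

theorem cbinom_sub_sub_one_mul_pow (a z : ℂ) (i : ℕ) :
    cbinom (i - a - 1) i * z ^ i = cbinom a i * (-z) ^ i := by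
  have := Ring.choose_neg (a + 1 - i) i
  rw [show -(a + 1 - i) = i - a - 1 by ring, show a + 1 - i + i - 1 = a by ring] at this
  rw [cbinom_eq_choose, cbinom_eq_choose, this, Units.smul_def, Int.coe_negOnePow_natCast,
    zsmul_eq_mul, neg_pow]
  push_cast
  ring

theorem finsum_finsum_eq_sum_antidiagonal {M : Type*} [AddCommMonoid M] (u : ℕ → ℕ → M)
    (B : ℕ) (hu : ∀ i j, B ≤ i + j → u i j = 0) :
    ∑ᶠ i, ∑ᶠ j, u i j = ∑ m ∈ range B, ∑ p ∈ antidiagonal m, u p.1 p.2 := by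
  have inner (i : ℕ) : ∑ᶠ j, u i j = ∑ j ∈ range (B - i), u i j :=
    finsum_eq_sum_of_support_subset _ fun j hj => by
      by_contra h
      exact hj (hu i j (by simp at h; omega))
  simp only [inner, Nat.sum_antidiagonal_eq_sum_range_succ_mk, sum_range_diag_flip]
  refine finsum_eq_sum_of_support_subset _ fun i hi => ?_
  by_contra h
  exact hi (sum_eq_zero fun j _ => hu i j (by simp at h; omega))

theorem finsum_finsum_mul_eq_finsum {R : Type*} [Semiring R] (a : ℕ → ℕ → R) (F : ℕ → R)
    (B : ℕ) (hF : ∀ m, B ≤ m → F m = 0) :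
    ∑ᶠ i, ∑ᶠ j, a i j * F (i + j) = ∑ᶠ m, (∑ p ∈ antidiagonal m, a p.1 p.2) * F m := by
  rw [finsum_finsum_eq_sum_antidiagonal _ B fun i j h => by rw [hF _ h, mul_zero],
    finsum_eq_sum_of_support_subset (s := range B) _ fun m hm => by
      by_contra h
      exact hm (by simp only [hF m (by simpa using h), mul_zero])]
  refine sum_congr rfl fun m _ => ?_
  rw [sum_mul]
  exact sum_congr rfl fun p hp => by rw [mem_antidiagonal.1 hp]

/-- Since `f c` is the coefficient of `x^{-c-1}`, this says that the powers of `x` occurring in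
each class `c + ℤ` are bounded above. It keeps the `∑ᶠ` in `substZ` and in its compositions
finite; an infinite `∑ᶠ` would silently be `0`. -/
def IsUpperTruncated (f : ℂ → ℂ) : Prop := ∀ c : ℂ, ∃ B : ℕ, ∀ i : ℕ, B ≤ i → f (c - i) = 0

theorem IsUpperTruncated.comp_add_right {f : ℂ → ℂ} (hf : IsUpperTruncated f) (γ : ℂ) :
    IsUpperTruncated (fun x => f (x + γ)) := fun c => by
  obtain ⟨B, hB⟩ := hf (c + γ)
  exact ⟨B, fun i hi => by simpa only [sub_add_eq_add_sub] using hB i hi⟩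

theorem isUpperTruncated_substZ {f : ℂ → ℂ} (hf : IsUpperTruncated f) (z : ℂ) :
    IsUpperTruncated (substZ z f) := fun c => by
  obtain ⟨B, hB⟩ := hf c
  refine ⟨B, fun i hi => finsum_eq_zero_of_forall_eq_zero fun j => ?_⟩
  rw [show c - i - j = c - (i + j : ℕ) by push_cast; ring, hB _ (by omega), mul_zero]

theorem mulXZ_comp_add_right (z β γ : ℂ) (f : ℂ → ℂ) :
    mulXZ z β (fun x => f (x + γ)) = fun n => mulXZ z β f (n + γ) :=
  funext fun n => finsum_congr fun i => by ring_nf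

theorem mulXpZ_neg (z β : ℂ) (f : ℂ → ℂ) : mulXpZ (-z) β f = mulXZ z β f := rfl

theorem mulXZ_neg (z β : ℂ) (f : ℂ → ℂ) : mulXZ (-z) β f = mulXpZ z β f := by
  unfold mulXZ mulXpZ
  simp only [neg_neg]

theorem mulXpZ_substZ {f : ℂ → ℂ} (hf : IsUpperTruncated f) (z γ c : ℂ) :
    mulXpZ z γ (substZ z f) c = substZ z (fun x => f (x + γ)) c := by
  obtain ⟨B, hB⟩ := hf (c + γ)
  calc mulXpZ z γ (substZ z f) c
      = ∑ᶠ (j : ℕ) (i : ℕ), (cbinom γ j * cbinom (((j + i : ℕ) : ℂ) - c - γ - 1) i) *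
          (z ^ (j + i) * f (c + γ - (j + i : ℕ))) := by
        simp only [mulXpZ, substZ, mul_finsum]
        refine finsum_congr fun j => finsum_congr fun i => ?_
        push_cast
        ring_nf
    _ = ∑ᶠ m : ℕ, (∑ p ∈ antidiagonal m, cbinom γ p.1 * cbinom ((m : ℂ) - c - γ - 1) p.2) *
          (z ^ m * f (c + γ - m)) := by
        rw [finsum_finsum_mul_eq_finsum _ (fun m => z ^ m * f (c + γ - m)) B
          fun m hm => by rw [hB m hm, mul_zero]]
        refine finsum_congr fun m => ?_
        congr 1
        exact sum_congr rfl fun p hp => by rw [mem_antidiagonal.1 hp]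
    _ = substZ z (fun x => f (x + γ)) c := by
        refine finsum_congr fun m => ?_
        rw [← cbinom_add, show γ + ((m : ℂ) - c - γ - 1) = m - c - 1 by ring,
          show c + γ - m = c - m + γ by ring]
        ring

theorem substZ_mulXZ {g : ℂ → ℂ} (hg : IsUpperTruncated g) (z β n : ℂ) :
    substZ z (mulXZ z β g) n = substZ z g (n + β) := by
  obtain ⟨B, hB⟩ := hg (n + β)
  calc substZ z (mulXZ z β g) n
      = ∑ᶠ (i : ℕ) (j : ℕ), (cbinom n i * cbinom β j) *
          ((-z) ^ (i + j) * g (n + β - (i + j : ℕ))) := by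
        simp only [mulXZ, substZ, mul_finsum]
        refine finsum_congr fun i => finsum_congr fun j => ?_
        rw [cbinom_sub_sub_one_mul_pow, pow_add]
        push_cast
        ring_nf
    _ = ∑ᶠ m : ℕ, cbinom (n + β) m * ((-z) ^ m * g (n + β - m)) := by
        rw [finsum_finsum_mul_eq_finsum _ (fun m => (-z) ^ m * g (n + β - m)) B
          fun m hm => by rw [hB m hm, mul_zero]]
        simp only [cbinom_add]
    _ = substZ z g (n + β) := by
        refine finsum_congr fun m => ?_
        rw [← mul_assoc, ← cbinom_sub_sub_one_mul_pow]

theorem substZ_neg_substZ {f : ℂ → ℂ} (hf : IsUpperTruncated f) (z : ℂ) :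
    substZ (-z) (substZ z f) = f := by
  funext n
  obtain ⟨B, hB⟩ := hf n
  calc substZ (-z) (substZ z f) n
      = ∑ᶠ (i : ℕ) (j : ℕ), (cbinom n i * cbinom (((i + j : ℕ) : ℂ) - n - 1) j) *
          (z ^ (i + j) * f (n - (i + j : ℕ))) := by
        simp only [substZ, mul_finsum]
        refine finsum_congr fun i => finsum_congr fun j => ?_
        rw [cbinom_sub_sub_one_mul_pow, neg_neg, pow_add]
        push_cast
        ring_nf
    _ = ∑ᶠ m : ℕ, cbinom ((m : ℂ) - 1) m * (z ^ m * f (n - m)) := by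
        rw [finsum_finsum_mul_eq_finsum _ (fun m => z ^ m * f (n - m)) B
          fun m hm => by rw [hB m hm, mul_zero]]
        refine finsum_congr fun m => ?_
        rw [show (m : ℂ) - 1 = n + (m - n - 1) by ring, cbinom_add]
        congr 1
        exact sum_congr rfl fun p hp => by rw [mem_antidiagonal.1 hp]
    _ = f n := by
        rw [finsum_eq_single _ 0 fun m hm => ?_]
        · simp [cbinom]
        · rw [show (m : ℂ) - 1 = ((m - 1 : ℕ) : ℂ) by rw [Nat.cast_sub (by omega)]; simp,
            cbinom_natCast_of_lt (by omega), zero_mul]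

theorem mulXpZ_substZ_add {f : ℂ → ℂ} (hf : IsUpperTruncated f) (z β γ n : ℂ) :
    mulXpZ z γ (substZ z f) (n + β) = substZ z (fun m => mulXZ z β f (m + γ)) n := by
  rw [mulXpZ_substZ hf, ← substZ_mulXZ (hf.comp_add_right γ), mulXZ_comp_add_right]

def IsPowerSeries (h : ℂ → ℂ) : Prop := ∀ n : ℂ, (¬ ∃ m : ℤ, n = m ∧ m ≤ -1) → h n = 0

theorem isPowerSeries_substZ {h : ℂ → ℂ} (hh : IsPowerSeries h) (z : ℂ) :
    IsPowerSeries (substZ z h) := fun n hn => by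
  refine finsum_eq_zero_of_forall_eq_zero fun i => ?_
  by_cases hni : ∃ m : ℤ, n - i = m ∧ m ≤ -1
  · obtain ⟨m, hm, hm1⟩ := hni
    have hmi : 0 ≤ m + i := by
      by_contra h
      exact hn ⟨m + i, by push_cast; linear_combination hm, by omega⟩
    -- `n = m + i` is a nonnegative integer, so `i - n - 1` is a natural number below `i`
    have harg : (i : ℂ) - n - 1 = ((-(m + 1)).toNat : ℤ) := by
      rw [Int.toNat_of_nonneg (by omega)]
      push_cast
      linear_combination -hm
    rw [harg, Int.cast_natCast, cbinom_natCast_of_lt (by omega), zero_mul, zero_mul]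
  · rw [hh _ hni, mul_zero]

theorem isPowerSeries_mulXZ_iff {f : ℂ → ℂ} (hf : IsUpperTruncated f) (z β γ : ℂ) :
    IsPowerSeries (fun n => mulXZ z β f (n + γ)) ↔
      IsPowerSeries (fun n => mulXpZ z γ (substZ z f) (n + β)) := by
  refine ⟨fun h n hn => ?_, fun h n hn => ?_⟩
  · show mulXpZ z γ (substZ z f) (n + β) = 0
    rw [mulXpZ_substZ_add hf]
    exact isPowerSeries_substZ h z n hn
  · show mulXZ z β f (n + γ) = 0
    have key := mulXpZ_substZ_add (isUpperTruncated_substZ hf z) (-z) γ β n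
    rw [substZ_neg_substZ hf, mulXpZ_neg] at key
    simp only [mulXZ_neg] at key
    rw [key]
    exact isPowerSeries_substZ h (-z) n hn

theorem laurent_iff_exists_shift_isPowerSeries {ι : Type*} (g : ι → ℂ → ℂ) (c : ℂ) :
    ((∀ n : ℂ, (∀ m : ℤ, n ≠ m) → ∀ w, g w (n + c) = 0) ∧
        ∃ N : ℤ, ∀ m : ℤ, N ≤ m → ∀ w, g w (m + c) = 0) ↔
      ∃ r : ℕ, ∀ w, IsPowerSeries fun n => g w (n + (r + c)) := by
  constructor
  · rintro ⟨hint, N, hN⟩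
    refine ⟨N.toNat, fun w n hn => ?_⟩
    show g w (n + (N.toNat + c)) = 0
    rw [← add_assoc]
    by_cases h : ∃ m : ℤ, n = m
    · obtain ⟨m, rfl⟩ := h
      have hm : 0 ≤ m := by
        by_contra hneg
        exact hn ⟨m, rfl, by omega⟩
      exact_mod_cast hN (m + N.toNat) (by omega) w
    · simp only [not_exists] at h
      exact hint _ (fun m hm => h (m - N.toNat) (by push_cast; linear_combination hm)) w
  · rintro ⟨r, hr⟩
    refine ⟨fun n hn w => ?_, r, fun m hm w => ?_⟩
    · have := hr w (n - r) fun ⟨m, hm, _⟩ => hn (m + r) (by push_cast; linear_combination hm)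
      convert this using 2
      ring
    · have := hr w ((m - r : ℤ) : ℂ) fun ⟨k, hk, hk1⟩ => by
        have : m - r = k := by exact_mod_cast hk
        omega
      convert this using 2
      push_cast
      ring

theorem isUpperTruncated_ydual {V : Type*} [AddCommGroup V] [Module ℂ V] {W : Type*}
    [AddCommGroup W] [Module ℂ W] {A : VertexAlg V} {σ : VAAut A} {T : ℕ} (hT : 0 < T)
    (M : RightTwistedModule W A σ T) {α : W → ℂ} (hα : α 0 = 0) (v : V) (w : W) :
    IsUpperTruncated (Ydual M.Y v α w) := fun c => by
  have hT0 : (T : ℂ) ≠ 0 := Nat.cast_ne_zero.2 hT.ne'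
  by_cases hc : ∃ m₀ : ℤ, c = m₀ / T
  · obtain ⟨m₀, rfl⟩ := hc
    obtain ⟨N, hN⟩ := M.trunc v w
    refine ⟨(m₀ - N).toNat, fun i hi => ?_⟩
    have harg : (m₀ : ℂ) / T - i = ((m₀ - T * i : ℤ) : ℂ) / T := by
      field_simp
      push_cast
      ring
    have hle : m₀ - T * i ≤ N := by nlinarith [Int.self_le_toNat (m₀ - N)]
    rw [Ydual, harg, hN _ hle, hα]
  · refine ⟨0, fun i _ => ?_⟩
    have hoff : ∀ m : ℤ, c - i ≠ (m : ℂ) / T := fun m hm =>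
      hc ⟨m + T * i, by rw [sub_eq_iff_eq_add.1 hm]; push_cast; field_simp⟩
    rw [Ydual, M.latt v _ hoff, LinearMap.zero_apply, hα]

theorem mem_Dspace_iff_shifted_powerSeries_general
    (V : Type*) [AddCommGroup V] [Module ℂ V] (W : Type*) [AddCommGroup W] [Module ℂ W]
    (A : VertexAlg V) (σ₁ σ₂ σ : VAAut A) (T : ℕ) (hT : 0 < T)
    (z : ℂ)
    (M : RightTwistedModule W A σ T)
    (α : W → ℂ) (hlin : IsLinearMap ℂ α) :
    α ∈ Dspace σ₁ σ₂ T M.Y z ↔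
      ∀ (j₁ j₂ : ℤ) (v : V), eig σ₁ T j₁ v → eig σ₂ T j₂ v →
        ∃ r s : ℕ, ∀ n : ℂ, (¬ ∃ m : ℤ, n = (m : ℂ) ∧ m ≤ -1) → ∀ w : W,
          mulXpZ z ((r : ℂ) + (j₂ : ℂ) / (T : ℂ)) (substZ z (Ydual M.Y v α w))
            (n + ((s : ℂ) + (j₁ : ℂ) / (T : ℂ))) = 0 := by
  have hf (v : V) (w : W) : IsUpperTruncated (Ydual M.Y v α w) :=
    isUpperTruncated_ydual hT M hlin.map_zero v w
  simp only [Dspace, Set.mem_ofPred_eq, hlin, true_and, DCond,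
    laurent_iff_exists_shift_isPowerSeries, isPowerSeries_mulXZ_iff (hf _ _)]
  refine forall₅_congr fun j₁ j₂ v _ _ => ?_
  rw [exists_comm]
  exact exists₂_congr fun r s => ⟨fun h n hn w => h w n hn, fun h w n hn => h n hn w⟩

/-- Lemma 3.9.  For a linear functional `α ∈ W^*`:
`α ∈ 𝔇^{(z)}_{σ₁,σ₂}(W)` if and only if for every `v ∈ V^{(j₁,j₂)}` there exist
`r, s ∈ ℕ` such that `x^{s+j₁/T}(x+z)^{r+j₂/T} Y_W^*(v, x+z) α ∈ W^*[[x]]`. -/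
theorem mem_Dspace_iff_shifted_powerSeries
    (V : Type*) [AddCommGroup V] [Module ℂ V] (W : Type*) [AddCommGroup W] [Module ℂ W]
    (A : VertexAlg V) (σ₁ σ₂ σ : VAAut A) (T : ℕ) (hT : 0 < T)
    (hσ₁ : ∀ v : V, (⇑σ₁.g)^[T] v = v) (hσ₂ : ∀ v : V, (⇑σ₂.g)^[T] v = v)
    (hcommAut : ∀ v : V, σ₁.g (σ₂.g v) = σ₂.g (σ₁.g v))
    (hσ : ∀ v : V, σ.g (σ₁.g (σ₂.g v)) = v)
    (z : ℂ) (hz : z ≠ 0)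
    (M : RightTwistedModule W A σ T)
    (α : W → ℂ) (hlin : IsLinearMap ℂ α) :
    α ∈ Dspace σ₁ σ₂ T M.Y z ↔
      ∀ (j₁ j₂ : ℤ) (v : V), eig σ₁ T j₁ v → eig σ₂ T j₂ v →
        ∃ r s : ℕ, ∀ n : ℂ, (¬ ∃ m : ℤ, n = (m : ℂ) ∧ m ≤ -1) → ∀ w : W,
          mulXpZ z ((r : ℂ) + (j₂ : ℂ) / (T : ℂ)) (substZ z (Ydual M.Y v α w))
            (n + ((s : ℂ) + (j₁ : ℂ) / (T : ℂ))) = 0 :=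
  mem_Dspace_iff_shifted_powerSeries_general V W A σ₁ σ₂ σ T hT z M α hlin
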